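/- Let X₁, X₂, X₃ be independent with law U_T. For every r ∈ [2,∞), the probability that X₁ lies in both N^r(X₂) and N^r(X₃) equals P(X₁ ∈ N^r(X₂) and X₁ ∈ N^r(X₃)) = (15r⁴ − 45r² + 34)/(15r⁴). -/

import Mathlib

open MeasureTheory Real Set

noncomputable section

/-- The z-component of the cross product of two planar vectors. -/
def cross (u v : ℝ × ℝ) : ℝ := u.1 * v.2 - u.2 * v.1

/-- Barycentric coordinates of `x` with respect to the triangle with
vertices `a`, `b`, `c`. -/
def bary (a b c x : ℝ × ℝ) : Fin 3 → ℝ := fun i =>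
  if i = 1 then cross (x - a) (c - a) / cross (b - a) (c - a)
  else if i = 2 then cross (b - a) (x - a) / cross (b - a) (c - a)
  else 1 - cross (x - a) (c - a) / cross (b - a) (c - a)
    - cross (b - a) (x - a) / cross (b - a) (c - a)

/-- The closed triangle with vertices `a`, `b`, `c` (the set of points with
nonnegative barycentric coordinates). -/
def tri (a b c : ℝ × ℝ) : Set (ℝ × ℝ) := {x | ∀ i : Fin 3, 0 ≤ bary a b c x i}

/-- The least index maximizing the barycentric coordinates of `x`. -/
def jmax (a b c x : ℝ × ℝ) : Fin 3 :=
  if bary a b c x 1 ≤ bary a b c x 0 ∧ bary a b c x 2 ≤ bary a b c x 0 then 0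
  else if bary a b c x 2 ≤ bary a b c x 1 then 1 else 2

/-- The `r`-factor proximity region of `x` in the triangle with vertices `a`, `b`, `c`:
`N^r(x) = {z ∈ T : 1 − β_{j(x)}(z) ≤ r (1 − β_{j(x)}(x))}`. -/
def prox (a b c : ℝ × ℝ) (r : ℝ) (x : ℝ × ℝ) : Set (ℝ × ℝ) :=
  {z | z ∈ tri a b c ∧
    1 - bary a b c z (jmax a b c x) ≤ r * (1 - bary a b c x (jmax a b c x))}

/-- The uniform probability measure on `s ⊆ ℝ²` (normalized Lebesgue measure). -/
def unif (s : Set (ℝ × ℝ)) : Measure (ℝ × ℝ) := (volume s)⁻¹ • volume.restrict s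

def y1 : ℝ × ℝ := (0, 0)
def y2 : ℝ × ℝ := (1, 0)
def y3 : ℝ × ℝ := (1 / 2, Real.sqrt 3 / 2)

/-- The standard equilateral triangle. -/
def T : Set (ℝ × ℝ) := tri y1 y2 y3

/-- The `r`-factor proximity region in the standard triangle. -/
def N (r : ℝ) (x : ℝ × ℝ) : Set (ℝ × ℝ) := prox y1 y2 y3 r x

/-- The null arc probability `μ(r) = P(X₂ ∈ N^r(X₁))` for independent uniform
points in the standard triangle. -/
def mu (r : ℝ) : ℝ := (((unif T).prod (unif T)) {p | p.2 ∈ N r p.1}).toReal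

/-!
For `r ≥ 2` every threshold `1 - (1 - β_j(x)) / r` is at least `1/2`, and a point of the triangle
has at most one barycentric coordinate above `1/2`. Hence the Γ₁-region of `x` is the triangle
minus three disjoint corners `{β_j > 1 - (1 - β_j(x)) / r}`, each homothetic to the triangle with
ratio `(1 - β_j(x)) / r`, so it carries probability `g(x) = 1 - ∑ⱼ ((1 - β_j(x)) / r)²`.
Conditioning on `X₁`, the required probability is `E[g(X₁)²]`. The barycentric chart
`x ↦ (β₁(x), β₂(x))` is affine, so it carries the uniform law on any nondegenerate triangle to the
uniform law on `{u, v ≥ 0, u + v ≤ 1}`, where both the corner areas and `E[g²]` are iterated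
polynomial integrals.
-/

open ProbabilityTheory

section Barycentric

variable {a b c : ℝ × ℝ}

lemma bary_zero_eq (x : ℝ × ℝ) : bary a b c x 0 = 1 - bary a b c x 1 - bary a b c x 2 := by
  simp [bary]

lemma continuous_bary (j : Fin 3) : Continuous fun x => bary a b c x j := by
  simp only [bary, cross]
  split_ifs <;> fun_prop

lemma measurable_jmax : Measurable (jmax a b c) := by
  have hle (i j : Fin 3) : MeasurableSet {x | bary a b c x i ≤ bary a b c x j} :=
    measurableSet_le (continuous_bary i).measurable (continuous_bary j).measurable
  exact Measurable.ite ((hle 1 0).inter (hle 2 0)) measurable_const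
    (Measurable.ite (hle 2 1) measurable_const measurable_const)

lemma jmax_eq_of_half_lt {x : ℝ × ℝ} {j : Fin 3} (hx : x ∈ tri a b c)
    (hj : 1 / 2 < bary a b c x j) : jmax a b c x = j := by
  have := bary_zero_eq (a := a) (b := b) (c := c) x
  have := hx 0; have := hx 1; have := hx 2
  unfold jmax
  fin_cases j <;> split_ifs <;> grind

lemma mem_prox_iff {r : ℝ} {x z : ℝ × ℝ} (hr : 2 ≤ r) (hx : x ∈ tri a b c) (hz : z ∈ tri a b c) :
    x ∈ prox a b c r z ↔ ∀ j, 1 - bary a b c x j ≤ r * (1 - bary a b c z j) := by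
  refine ⟨fun ⟨_, hle⟩ j => ?_, fun h => ⟨hx, h _⟩⟩
  by_contra! hlt
  have hxj : 0 ≤ bary a b c x j := hx j
  have : jmax a b c z = j := jmax_eq_of_half_lt hz (by nlinarith)
  exact absurd (this ▸ hle) (not_le.mpr hlt)

lemma one_sub_bary_div_mem {r : ℝ} {x : ℝ × ℝ} (hr : 2 ≤ r) (hx : x ∈ tri a b c) (j : Fin 3) :
    0 ≤ (1 - bary a b c x j) / r ∧ (1 - bary a b c x j) / r ≤ 1 / 2 := by
  have := bary_zero_eq (a := a) (b := b) (c := c) x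
  have := hx 0; have := hx 1; have := hx 2
  have hβ : bary a b c x j ≤ 1 := by fin_cases j <;> simp <;> linarith
  have hr0 : 0 < r := by linarith
  exact ⟨div_nonneg (by linarith [hx j]) hr0.le, by rw [div_le_iff₀ hr0]; linarith [hx j]⟩

lemma cross_rotate : cross (c - b) (a - b) = cross (b - a) (c - a) := by
  simp only [cross, Prod.fst_sub, Prod.snd_sub]; ring

lemma bary_rotate (h : cross (b - a) (c - a) ≠ 0) (x : ℝ × ℝ) (i : Fin 3) :
    bary b c a x i = bary a b c x (i + 1) := by
  fin_cases i <;> simp [bary, cross_rotate (a := a)] <;> field_simp <;>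
    simp only [cross, Prod.fst_sub, Prod.snd_sub] <;> ring

lemma tri_rotate (h : cross (b - a) (c - a) ≠ 0) : tri b c a = tri a b c := by
  ext x
  simp only [tri, mem_ofPred_eq, bary_rotate h]
  exact ⟨fun hx i => by simpa using hx (i - 1), fun hx i => hx (i + 1)⟩

end Barycentric

def stdTriangle : Set (ℝ × ℝ) := {p | 0 ≤ p.1 ∧ 0 ≤ p.2 ∧ p.1 + p.2 ≤ 1}

lemma measurableSet_stdTriangle : MeasurableSet stdTriangle :=
  (measurableSet_le measurable_const measurable_fst).inter
    ((measurableSet_le measurable_const measurable_snd).inter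
      (measurableSet_le (measurable_fst.add measurable_snd) measurable_const))

lemma mk_mem_stdTriangle {u v : ℝ} : (u, v) ∈ stdTriangle ↔ u ∈ Icc 0 1 ∧ v ∈ Icc 0 (1 - u) := by
  simp only [stdTriangle, mem_ofPred_eq, mem_Icc]
  grind

lemma setLIntegral_stdTriangle {f : ℝ × ℝ → ENNReal} (hf : Measurable f) :
    ∫⁻ p in stdTriangle, f p = ∫⁻ u in Icc 0 1, ∫⁻ v in Icc 0 (1 - u), f (u, v) := by
  classical
  rw [← lintegral_indicator measurableSet_stdTriangle, Measure.volume_eq_prod,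
    lintegral_prod _ (hf.indicator measurableSet_stdTriangle).aemeasurable,
    ← lintegral_indicator measurableSet_Icc]
  congr 1
  ext u
  rw [indicator_apply]
  split_ifs with hu
  · rw [← lintegral_indicator measurableSet_Icc]
    congr 1
    ext v
    simp only [indicator_apply, mk_mem_stdTriangle, hu, true_and]
  · simp [mk_mem_stdTriangle, hu]

lemma setLIntegral_Icc_ofReal {f : ℝ → ℝ} {a b : ℝ} (hab : a ≤ b) (hf : ContinuousOn f (Icc a b))
    (hf0 : ∀ x ∈ Icc a b, 0 ≤ f x) :
    ∫⁻ x in Icc a b, ENNReal.ofReal (f x) = ENNReal.ofReal (∫ x in a..b, f x) := by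
  rw [intervalIntegral.integral_of_le hab, ← integral_Icc_eq_integral_Ioc,
    ofReal_integral_eq_lintegral_ofReal hf.integrableOn_Icc
      ((ae_restrict_iff' measurableSet_Icc).mpr (ae_of_all _ hf0))]

lemma setLIntegral_stdTriangle_ofReal {F : ℝ → ℝ → ℝ} (hF : Continuous F.uncurry)
    (hF0 : ∀ u v, 0 ≤ F u v) :
    ∫⁻ p in stdTriangle, ENNReal.ofReal (F p.1 p.2) =
      ENNReal.ofReal (∫ u in (0 : ℝ)..1, ∫ v in (0 : ℝ)..(1 - u), F u v) := by
  rw [setLIntegral_stdTriangle (by fun_prop)]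
  calc _ = ∫⁻ u in Icc 0 1, ENNReal.ofReal (∫ v in (0 : ℝ)..(1 - u), F u v) :=
        setLIntegral_congr_fun measurableSet_Icc fun u hu =>
          setLIntegral_Icc_ofReal (by linarith [hu.2]) (hF.uncurry_left u).continuousOn
            fun v _ => hF0 u v
    _ = _ := setLIntegral_Icc_ofReal zero_le_one
        (intervalIntegral.continuous_parametric_intervalIntegral_of_continuous hF
          (by fun_prop)).continuousOn
        fun u hu => intervalIntegral.integral_nonneg (by linarith [hu.2]) fun v _ => hF0 u v

lemma volume_stdTriangle : volume stdTriangle = ENNReal.ofReal (1 / 2) := by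
  have := setLIntegral_stdTriangle_ofReal (F := fun _ _ => 1) (by fun_prop)
    (fun _ _ => zero_le_one)
  simp only [ENNReal.ofReal_one, setLIntegral_one, intervalIntegral.integral_const, sub_zero,
    smul_eq_mul, mul_one] at this
  rw [this, intervalIntegral.integral_comp_sub_left (fun x => x)]
  norm_num

lemma unif_stdTriangle_fst_gt {t : ℝ} (ht0 : 0 ≤ t) (ht1 : t ≤ 1) :
    unif stdTriangle {p | t < p.1} = ENNReal.ofReal ((1 - t) ^ 2) := by
  have hS : MeasurableSet {p : ℝ × ℝ | t < p.1} := measurableSet_lt measurable_const measurable_fst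
  have hsection (u : ℝ) : ∫⁻ v in Icc 0 (1 - u), {p : ℝ × ℝ | t < p.1}.indicator 1 (u, v) =
      (Ioi t).indicator (fun u => ENNReal.ofReal (1 - u)) u := by
    by_cases hu : t < u <;> simp [hu]
  have hIoc : Ioi t ∩ Icc 0 1 = Ioc t 1 := by
    ext u
    simp only [mem_inter_iff, mem_Icc, mem_Ioi, mem_Ioc]
    grind
  have hvol : volume (stdTriangle ∩ {p | t < p.1}) = ENNReal.ofReal ((1 - t) ^ 2 / 2) := by
    rw [inter_comm, ← Measure.restrict_apply hS, ← lintegral_indicator_one hS,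
      setLIntegral_stdTriangle (measurable_one.indicator hS)]
    simp_rw [hsection]
    rw [setLIntegral_indicator measurableSet_Ioi, hIoc, setLIntegral_congr Ioc_ae_eq_Icc,
      setLIntegral_Icc_ofReal ht1 (by fun_prop) fun u hu => by linarith [hu.2],
      intervalIntegral.integral_comp_sub_left (fun x => x)]
    norm_num
  rw [unif, Measure.smul_apply, Measure.restrict_apply hS, smul_eq_mul, inter_comm, hvol,
    volume_stdTriangle, ← ENNReal.ofReal_inv_of_pos (by norm_num),
    ← ENNReal.ofReal_mul (by norm_num)]
  congr 1
  ring

section Chart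

variable {a b c : ℝ × ℝ}

def baryChart (a b c : ℝ × ℝ) (x : ℝ × ℝ) : ℝ × ℝ := (bary a b c x 1, bary a b c x 2)

lemma continuous_baryChart : Continuous (baryChart a b c) :=
  (continuous_bary 1).prodMk (continuous_bary 2)

lemma tri_eq_preimage_baryChart : tri a b c = baryChart a b c ⁻¹' stdTriangle := by
  ext x
  simp only [tri, stdTriangle, baryChart, mem_preimage, mem_ofPred_eq, Fin.forall_fin_succ,
    IsEmpty.forall_iff, Fin.succ_zero_eq_one, Fin.succ_one_eq_two, bary_zero_eq]
  exact ⟨fun ⟨_, h1, h2, _⟩ => ⟨h1, h2, by linarith⟩,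
    fun ⟨h1, h2, _⟩ => ⟨by linarith, h1, h2, trivial⟩⟩

lemma measurableSet_tri : MeasurableSet (tri a b c) := by
  rw [tri_eq_preimage_baryChart]
  exact continuous_baryChart.measurable measurableSet_stdTriangle

lemma map_baryChart_volume (h : cross (b - a) (c - a) ≠ 0) :
    (volume : Measure (ℝ × ℝ)).map (baryChart a b c) =
      ENNReal.ofReal |cross (b - a) (c - a)| • volume := by
  set Δ := cross (b - a) (c - a)
  let L : (ℝ × ℝ) →ₗ[ℝ] ℝ × ℝ := Matrix.toLin (Module.Basis.finTwoProd ℝ)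
    (Module.Basis.finTwoProd ℝ) (Δ⁻¹ • !![(c - a).2, -(c - a).1; -(b - a).2, (b - a).1])
  have hL : baryChart a b c = L ∘ (· + -a) := by
    ext x <;> simp [baryChart, bary, L, Matrix.toLin_finTwoProd_apply, cross, Δ] <;> ring
  have hdet : LinearMap.det L = Δ⁻¹ := by
    rw [LinearMap.det_toLin, Matrix.det_smul, Matrix.det_fin_two_of, Fintype.card_fin,
      show (c - a).2 * (b - a).1 - -(c - a).1 * -(b - a).2 = Δ by simp only [Δ, cross]; ring]
    field_simp
  have hdet0 : LinearMap.det L ≠ 0 := by simpa [hdet] using h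
  rw [hL, ← Measure.map_map (LinearMap.continuous_of_finiteDimensional L).measurable
    (measurable_add_const _), map_add_right_eq_self,
    Measure.map_linearMap_addHaar_eq_smul_addHaar volume hdet0, hdet, inv_inv]

lemma volume_tri (h : cross (b - a) (c - a) ≠ 0) :
    volume (tri a b c) = ENNReal.ofReal |cross (b - a) (c - a)| * ENNReal.ofReal (1 / 2) := by
  rw [tri_eq_preimage_baryChart, ← Measure.map_apply continuous_baryChart.measurable
    measurableSet_stdTriangle, map_baryChart_volume h, Measure.smul_apply, volume_stdTriangle,
    smul_eq_mul]

lemma isProbabilityMeasure_unif_tri (h : cross (b - a) (c - a) ≠ 0) :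
    IsProbabilityMeasure (unif (tri a b c)) :=
  cond_isProbabilityMeasure_of_finite (by simp [volume_tri h, h])
    (by rw [volume_tri h]; exact ENNReal.mul_ne_top ENNReal.ofReal_ne_top ENNReal.ofReal_ne_top)

lemma unif_inter_self {s : Set (ℝ × ℝ)} (hs : MeasurableSet s) (t : Set (ℝ × ℝ)) :
    unif s (s ∩ t) = unif s t :=
  cond_inter_self hs t volume

lemma map_baryChart_unif (h : cross (b - a) (c - a) ≠ 0) :
    (unif (tri a b c)).map (baryChart a b c) = unif stdTriangle := by
  have hΔ0 : ENNReal.ofReal |cross (b - a) (c - a)| ≠ 0 := by simp [h]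
  rw [unif, unif, Measure.map_smul, tri_eq_preimage_baryChart,
    ← Measure.restrict_map continuous_baryChart.measurable measurableSet_stdTriangle,
    ← tri_eq_preimage_baryChart, volume_tri h, map_baryChart_volume h, Measure.restrict_smul,
    smul_smul, volume_stdTriangle, ENNReal.mul_inv (Or.inl hΔ0) (Or.inl ENNReal.ofReal_ne_top),
    mul_right_comm, ENNReal.inv_mul_cancel hΔ0 ENNReal.ofReal_ne_top, one_mul]

lemma unif_tri_bary_gt (h : cross (b - a) (c - a) ≠ 0) (j : Fin 3) {t : ℝ} (ht0 : 0 ≤ t)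
    (ht1 : t ≤ 1) : unif (tri a b c) {z | t < bary a b c z j} = ENNReal.ofReal ((1 - t) ^ 2) := by
  have key {a b c : ℝ × ℝ} (h : cross (b - a) (c - a) ≠ 0) :
      unif (tri a b c) {z | t < bary a b c z 1} = ENNReal.ofReal ((1 - t) ^ 2) := by
    rw [show {z | t < bary a b c z 1} = baryChart a b c ⁻¹' {p | t < p.1} from rfl,
      ← Measure.map_apply continuous_baryChart.measurable
        (measurableSet_lt measurable_const measurable_fst),
      map_baryChart_unif h, unif_stdTriangle_fst_gt ht0 ht1]
  -- the corners at `a` and `c` are the corners at the second vertex of `(c, a, b)` and `(b, c, a)`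
  have h₁ : cross (c - b) (a - b) ≠ 0 := cross_rotate (a := a) ▸ h
  have h₂ : cross (a - c) (b - c) ≠ 0 := (cross_rotate (a := c)).symm ▸ h
  fin_cases j
  · simpa [← tri_rotate h₂, bary_rotate h₂] using key h₂
  · exact key h
  · simpa [tri_rotate h, bary_rotate h] using key h₁

lemma measurableSet_mem_prox (r : ℝ) :
    MeasurableSet {q : (ℝ × ℝ) × (ℝ × ℝ) | q.2 ∈ prox a b c r q.1} := by
  have hbary : Measurable fun p : (ℝ × ℝ) × Fin 3 => bary a b c p.1 p.2 :=
    measurable_from_prod_countable_left fun j => (continuous_bary j).measurable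
  have hj : Measurable fun q : (ℝ × ℝ) × (ℝ × ℝ) => jmax a b c q.1 :=
    measurable_jmax.comp measurable_fst
  exact (measurable_snd measurableSet_tri).inter <| measurableSet_le
    (measurable_const.sub (hbary.comp (measurable_snd.prodMk hj)))
    (measurable_const.mul (measurable_const.sub (hbary.comp (measurable_fst.prodMk hj))))

lemma unif_tri_setOf_mem_prox (h : cross (b - a) (c - a) ≠ 0) {r : ℝ} (hr : 2 ≤ r)
    {x : ℝ × ℝ} (hx : x ∈ tri a b c) :
    unif (tri a b c) {z | x ∈ prox a b c r z} =
      ENNReal.ofReal (1 - ∑ j, ((1 - bary a b c x j) / r) ^ 2) := by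
  have := isProbabilityMeasure_unif_tri h
  set T := tri a b c
  set t : Fin 3 → ℝ := fun j => 1 - (1 - bary a b c x j) / r with ht
  have hr0 : 0 < r := by linarith
  have hdev (j : Fin 3) := one_sub_bary_div_mem hr hx j
  let S (j : Fin 3) : Set (ℝ × ℝ) := T ∩ {z | t j < bary a b c z j}
  have hSmeas (j : Fin 3) : MeasurableSet (S j) :=
    measurableSet_tri.inter (measurableSet_lt measurable_const (continuous_bary j).measurable)
  have hS (j : Fin 3) : unif T (S j) = ENNReal.ofReal (((1 - bary a b c x j) / r) ^ 2) := by
    rw [unif_inter_self measurableSet_tri, unif_tri_bary_gt h j (by linarith [hdev j])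
      (by linarith [hdev j]), sub_sub_cancel]
  have hdisj : Pairwise (Function.onFun Disjoint S) := by
    intro i j hij
    rw [Function.onFun, disjoint_left]
    rintro z ⟨hz, hi : t i < _⟩ ⟨-, hj : t j < _⟩
    simp only [ht] at hi hj
    exact hij ((jmax_eq_of_half_lt hz (by linarith [hdev i])).symm.trans
      (jmax_eq_of_half_lt hz (by linarith [hdev j])))
  have hΓ : T ∩ {z | x ∈ prox a b c r z} = T \ ⋃ j, S j := by
    ext z
    simp only [mem_inter_iff, mem_ofPred_eq, mem_sdiff, mem_iUnion, S, not_exists, not_and,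
      not_lt]
    refine and_congr_right fun hz => (mem_prox_iff hr hx hz).trans (forall_congr' fun j => ?_)
    rw [imp_iff_right hz, ht, le_sub_comm, div_le_iff₀ hr0, mul_comm]
  have hT : unif T T = 1 := by
    have := unif_inter_self (measurableSet_tri (a := a) (b := b) (c := c)) univ
    rwa [inter_univ, measure_univ] at this
  calc unif T {z | x ∈ prox a b c r z} = unif T (T \ ⋃ j, S j) := by
        rw [← hΓ, unif_inter_self measurableSet_tri]
    _ = 1 - ∑ j, unif T (S j) := by
        rw [measure_sdiff (iUnion_subset fun j => inter_subset_left)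
          (MeasurableSet.iUnion hSmeas).nullMeasurableSet (measure_ne_top _ _),
          measure_iUnion hdisj hSmeas, tsum_fintype, hT]
    _ = _ := by
        simp only [hS]
        rw [← ENNReal.ofReal_sum_of_nonneg fun j _ => sq_nonneg _, ← ENNReal.ofReal_one,
          ← ENNReal.ofReal_sub _ (Finset.sum_nonneg fun j _ => sq_nonneg _)]

end Chart

lemma integral_sq_quadratic (α β γ L : ℝ) :
    ∫ v in (0 : ℝ)..L, (α + β * v + γ * v ^ 2) ^ 2 =
      α ^ 2 * L + α * β * L ^ 2 + (β ^ 2 + 2 * α * γ) * L ^ 3 / 3 + β * γ * L ^ 4 / 2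
        + γ ^ 2 * L ^ 5 / 5 := by
  rw [intervalIntegral.integral_deriv_eq_sub' (fun v => α ^ 2 * v + α * β * v ^ 2
      + (β ^ 2 + 2 * α * γ) * v ^ 3 / 3 + β * γ * v ^ 4 / 2 + γ ^ 2 * v ^ 5 / 5)]
  · ring
  · ext v
    simp (disch := fun_prop) [deriv_div_const]
    ring
  · intro v _; fun_prop
  · fun_prop

lemma integral_integral_sq_one_sub_mul (k : ℝ) :
    ∫ u in (0 : ℝ)..1, ∫ v in (0 : ℝ)..(1 - u),
        (1 - k * ((u + v) ^ 2 + (1 - u) ^ 2 + (1 - v) ^ 2)) ^ 2 =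
      1 / 2 - 3 / 2 * k + 17 / 15 * k ^ 2 := by
  -- the inner integral, as a function of the length `w = 1 - u` of its interval
  set P : ℝ → ℝ := fun w => (1 - 2 * k * (w ^ 2 - w + 1)) ^ 2 * w
    + 2 * k / 3 * (1 - 2 * k * (w ^ 2 - w + 1)) * w ^ 3 + 2 / 15 * k ^ 2 * w ^ 5 with hP
  have inner (u : ℝ) : ∫ v in (0 : ℝ)..(1 - u),
      (1 - k * ((u + v) ^ 2 + (1 - u) ^ 2 + (1 - v) ^ 2)) ^ 2 = P (1 - u) := by
    calc _ = ∫ v in (0 : ℝ)..(1 - u), ((1 - 2 * k * ((1 - u) ^ 2 - (1 - u) + 1))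
          + 2 * k * (1 - u) * v + (-2 * k) * v ^ 2) ^ 2 := by congr 1; ext v; ring
      _ = P (1 - u) := by rw [integral_sq_quadratic, hP]; ring
  simp_rw [inner]
  rw [intervalIntegral.integral_comp_sub_left (fun w => P w),
    intervalIntegral.integral_deriv_eq_sub' (fun w => (1 - 2 * k) ^ 2 * w ^ 2 / 2
      + 4 * (1 - 2 * k) * k * w ^ 3 / 3 + (k ^ 2 - 5 * (1 - 2 * k) * k / 6) * w ^ 4
      - 4 / 3 * k ^ 2 * w ^ 5 + 7 / 15 * k ^ 2 * w ^ 6)]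
  · norm_num; ring
  · ext w
    simp (disch := fun_prop) [deriv_div_const, hP]
    ring
  · intro v _; fun_prop
  · fun_prop

lemma pi_fin_three_rel_and_rel_eq_lintegral_sq {α : Type*} [MeasurableSpace α] (μ : Measure α)
    [SigmaFinite μ] {R : α → α → Prop} (hR : MeasurableSet {q : α × α | R q.1 q.2}) :
    Measure.pi (fun _ : Fin 3 => μ) {x | R (x 1) (x 0) ∧ R (x 2) (x 0)} =
      ∫⁻ y, μ {z | R z y} ^ 2 ∂μ := by
  set A : Set (α × (Fin 2 → α)) := {p | R (p.2 0) p.1 ∧ R (p.2 1) p.1}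
  have hA : MeasurableSet A := by
    have (i : Fin 2) : MeasurableSet {p : α × (Fin 2 → α) | R (p.2 i) p.1} :=
      hR.preimage (f := fun p : α × (Fin 2 → α) => (p.2 i, p.1)) (by fun_prop)
    exact (this 0).inter (this 1)
  rw [show {x : Fin 3 → α | R (x 1) (x 0) ∧ R (x 2) (x 0)} =
      MeasurableEquiv.piFinSuccAbove (fun _ => α) 0 ⁻¹' A from rfl,
    (measurePreserving_piFinSuccAbove (fun _ => μ) 0).measure_preimage hA.nullMeasurableSet,
    Measure.prod_apply hA]
  congr 1
  ext y
  rw [show Prod.mk y ⁻¹' A = Set.pi univ fun _ => {z | R z y} by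
      ext w; simp [A, Fin.forall_fin_two],
    Measure.pi_pi, Fin.prod_univ_two, sq]

lemma lintegral_unif_tri_sq {a b c : ℝ × ℝ} (h : cross (b - a) (c - a) ≠ 0) {r : ℝ}
    (hr : 2 ≤ r) :
    ∫⁻ x, unif (tri a b c) {z | x ∈ prox a b c r z} ^ 2 ∂unif (tri a b c) =
      ENNReal.ofReal ((15 * r ^ 4 - 45 * r ^ 2 + 34) / (15 * r ^ 4)) := by
  set F : ℝ → ℝ → ℝ := fun u v =>
    (1 - (r ^ 2)⁻¹ * ((u + v) ^ 2 + (1 - u) ^ 2 + (1 - v) ^ 2)) ^ 2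
  have hae : ∀ᵐ x ∂unif (tri a b c), unif (tri a b c) {z | x ∈ prox a b c r z} ^ 2 =
      ENNReal.ofReal (F (baryChart a b c x).1 (baryChart a b c x).2) := by
    filter_upwards [ae_cond_mem measurableSet_tri] with x hx
    have hdev (j : Fin 3) := one_sub_bary_div_mem hr hx j
    rw [unif_tri_setOf_mem_prox h hr hx, ← ENNReal.ofReal_pow (by
      simp only [Fin.sum_univ_three]; nlinarith [hdev 0, hdev 1, hdev 2])]
    simp only [F, baryChart, Fin.sum_univ_three, bary_zero_eq]
    congr 1
    ring
  rw [lintegral_congr_ae hae, ← lintegral_map (f := fun p => ENNReal.ofReal (F p.1 p.2))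
      (by fun_prop) continuous_baryChart.measurable, map_baryChart_unif h, unif,
    lintegral_smul_measure, setLIntegral_stdTriangle_ofReal (F := F) (by fun_prop)
      (fun _ _ => sq_nonneg _), volume_stdTriangle, integral_integral_sq_one_sub_mul,
    ← ENNReal.ofReal_inv_of_pos (by norm_num), smul_eq_mul, ← ENNReal.ofReal_mul (by norm_num)]
  congr 1
  field_simp
  ring

/-- For `r ≥ 2`, `P(X₁ ∈ N^r(X₂) ∩ N^r(X₃)) = (15r⁴ − 45r² + 34)/(15r⁴)`. -/
theorem prob_both_in_gamma (r : ℝ) (hr : r ∈ Set.Ici (2 : ℝ)) :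
    ((Measure.pi fun _ : Fin 3 => unif T)
        {x | x 0 ∈ N r (x 1) ∧ x 0 ∈ N r (x 2)}).toReal =
      (15 * r ^ 4 - 45 * r ^ 2 + 34) / (15 * r ^ 4) := by
  have h : cross (y2 - y1) (y3 - y1) ≠ 0 := by norm_num [cross, y1, y2, y3]
  have : IsProbabilityMeasure (unif T) := isProbabilityMeasure_unif_tri h
  rw [pi_fin_three_rel_and_rel_eq_lintegral_sq (unif T) (R := fun z x => x ∈ N r z)
    (measurableSet_mem_prox r)]
  exact (congrArg ENNReal.toReal (lintegral_unif_tri_sq h hr)).trans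
    (ENNReal.toReal_ofReal (div_nonneg (by nlinarith [sq_nonneg (r ^ 2 - 3 / 2)])
      (by positivity)))
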